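/- Rotation number correction by translation: let f be a continuous, non-decreasing, degree-one circle map with lift F and irrational translation number ρ, and let G be a lift of another such map with ‖G − F‖_{C⁰} < δ. Then there exists t ∈ [−δ, δ] such that the lift G + t has translation number exactly ρ. -/

import Mathlib

/-!
The translation number of `G + t` is monotone in `t`, and continuous: it is the uniform limit of
the continuous functions `t ↦ (G + t)^[n] 0 / n`, the error being at most `1 / n` for every `t`.
Since `G - δ ≤ F ≤ G + δ` everywhere (closeness on `[0, 1]` spreads by periodicity of `G - F`),
the intermediate value theorem gives `t ∈ [-δ, δ]` with `τ (G + t) = τ F = ρ`.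
-/

open Filter

/-- A lift of a continuous, non-decreasing, degree-one circle map. -/
def IsCircleLift (F : ℝ → ℝ) : Prop :=
  Continuous F ∧ Monotone F ∧ ∀ x : ℝ, F (x + 1) = F x + 1

open Set

local notation "τ" => CircleDeg1Lift.translationNumber

namespace CircleDeg1Lift

def addConst (f : CircleDeg1Lift) (t : ℝ) : CircleDeg1Lift where
  toFun y := f y + t
  monotone' _ _ h := add_le_add_left (f.monotone h) t
  map_add_one' x := by simp only [map_add_one]; ring

theorem coe_addConst (f : CircleDeg1Lift) (t : ℝ) : ⇑(f.addConst t) = fun y => f y + t := rfl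

@[simp]
theorem addConst_apply (f : CircleDeg1Lift) (t x : ℝ) : f.addConst t x = f x + t := rfl

theorem abs_sub_lt_of_forall_Icc (f g : CircleDeg1Lift) {δ : ℝ}
    (h : ∀ x ∈ Icc (0 : ℝ) 1, |g x - f x| < δ) (x : ℝ) : |g x - f x| < δ := by
  have key : g x - f x = (g x - x) - (f x - x) := by ring
  rw [key, ← map_fract_sub_fract_eq g, ← map_fract_sub_fract_eq f, sub_sub_sub_cancel_right]
  exact h _ ⟨Int.fract_nonneg x, (Int.fract_lt_one x).le⟩

theorem dist_pow_map_zero_div_translationNumber_le (f : CircleDeg1Lift) {n : ℕ} (hn : 0 < n) :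
    dist ((f ^ n) 0 / n) (τ f) ≤ 1 / n := by
  have hn' : (0 : ℝ) < n := Nat.cast_pos.mpr hn
  rw [Real.dist_eq, div_sub' hn'.ne', abs_div, abs_of_pos hn', ← Real.dist_eq]
  exact div_le_div_of_nonneg_right (f.dist_pow_map_zero_mul_translationNumber_le n) hn'.le

theorem tendstoUniformly_pow_map_zero_div {α : Type*} (g : α → CircleDeg1Lift) :
    TendstoUniformly (fun (n : ℕ) a => (g a ^ n) 0 / n) (fun a => τ (g a)) atTop := by
  rw [Metric.tendstoUniformly_iff]
  intro ε hε
  filter_upwards [eventually_ge_atTop 1,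
    tendsto_one_div_atTop_nhds_zero_nat.eventually (gt_mem_nhds hε)] with n hn hnε a
  rw [dist_comm]
  exact (dist_pow_map_zero_div_translationNumber_le (g a) hn).trans_lt hnε

theorem continuous_addConst_pow_apply {f : CircleDeg1Lift} (hf : Continuous f) (n : ℕ) (x : ℝ) :
    Continuous fun t => (f.addConst t ^ n) x := by
  induction n with
  | zero => exact continuous_const
  | succ n ih =>
    simp only [pow_succ', mul_apply, addConst_apply]
    exact (hf.comp ih).add continuous_id

theorem continuous_translationNumber_addConst {f : CircleDeg1Lift} (hf : Continuous f) :
    Continuous fun t => τ (f.addConst t) :=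
  (tendstoUniformly_pow_map_zero_div f.addConst).continuous <| Frequently.of_forall fun n =>
    (continuous_addConst_pow_apply hf n 0).div_const _

theorem exists_translationNumber_addConst_eq (f : CircleDeg1Lift) {g : CircleDeg1Lift}
    (hg : Continuous g) {δ : ℝ} (hclose : ∀ x, |g x - f x| ≤ δ) :
    ∃ t ∈ Icc (-δ) δ, τ (g.addConst t) = τ f := by
  have hδ : -δ ≤ δ := neg_le_self ((abs_nonneg _).trans (hclose 0))
  have hlow : τ (g.addConst (-δ)) ≤ τ f := translationNumber_mono fun x => by
    have := (abs_le.1 (hclose x)).2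
    simp only [addConst_apply]
    linarith
  have hhigh : τ f ≤ τ (g.addConst δ) := translationNumber_mono fun x => by
    have := (abs_le.1 (hclose x)).1
    simp only [addConst_apply]
    linarith
  exact intermediate_value_Icc hδ (continuous_translationNumber_addConst hg).continuousOn
    ⟨hlow, hhigh⟩

end CircleDeg1Lift

def IsCircleLift.toCircleDeg1Lift {F : ℝ → ℝ} (hF : IsCircleLift F) : CircleDeg1Lift :=
  ⟨⟨F, hF.2.1⟩, hF.2.2⟩

@[simp]
theorem IsCircleLift.coe_toCircleDeg1Lift {F : ℝ → ℝ} (hF : IsCircleLift F) :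
    ⇑hF.toCircleDeg1Lift = F := rfl

theorem rotation_number_correction_general (F G : ℝ → ℝ)
    (hF : IsCircleLift F) (hG : IsCircleLift G)
    (ρ : ℝ)
    (hρ : ∀ x : ℝ, Tendsto (fun n : ℕ => (F^[n] x - x) / n) atTop (nhds ρ))
    (δ : ℝ)
    (hclose : ∀ x ∈ Set.Icc (0:ℝ) 1, |G x - F x| < δ) :
    ∃ t ∈ Set.Icc (-δ) δ, ∀ x : ℝ,
      Tendsto (fun n : ℕ => ((fun y => G y + t)^[n] x - x) / n) atTop (nhds ρ) := by
  set f := hF.toCircleDeg1Lift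
  set g := hG.toCircleDeg1Lift
  have hτf : τ f = ρ := f.translationNumber_eq_of_tendsto₀ (by simpa [f] using hρ 0)
  obtain ⟨t, ht, hτt⟩ := f.exists_translationNumber_addConst_eq hG.1
    fun x => (f.abs_sub_lt_of_forall_Icc g hclose x).le
  refine ⟨t, ht, fun x => ?_⟩
  simpa [hτt, hτf, CircleDeg1Lift.coe_pow, CircleDeg1Lift.coe_addConst, g]
    using (g.addConst t).tendsto_translationNumber x

/-- if `F` has irrational translation number `ρ` and `G` is
`C⁰`-close to `F` (within `δ`), then some translate `G + t`, `t ∈ [-δ, δ]`,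
has translation number exactly `ρ`. -/
theorem rotation_number_correction (F G : ℝ → ℝ)
    (hF : IsCircleLift F) (hG : IsCircleLift G)
    (ρ : ℝ) (hirr : Irrational ρ)
    (hρ : ∀ x : ℝ, Tendsto (fun n : ℕ => (F^[n] x - x) / n) atTop (nhds ρ))
    (δ : ℝ) (hδ : 0 < δ)
    (hclose : ∀ x ∈ Set.Icc (0:ℝ) 1, |G x - F x| < δ) :
    ∃ t ∈ Set.Icc (-δ) δ, ∀ x : ℝ,
      Tendsto (fun n : ℕ => ((fun y => G y + t)^[n] x - x) / n) atTop (nhds ρ) :=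
  rotation_number_correction_general F G hF hG ρ hρ δ hclose
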